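/- arXiv:math/0510585 — 3 statements merged into one kernel-verified Lean document; each statement's English description precedes it below -/
import Mathlib

section
/- For every natural number n ≥ 1, the harmonic number H_n = 1 + 1/2 + ... + 1/n satisfies 1/(2n + 1/(1-γ) - 2) ≤ H_n - ln n - γ < 1/(2n + 1/3), where γ is the Euler–Mascheroni constant, with equality on the left only for n = 1. -/
/-! The error `E n = H n - log n - γ` tends to `0` and telescopes,
`E n - E (n + 1) = log (1 + 1/n) - 1/(n + 1)`. Hence `E n < f n` for every large `n` as soon as
`f → 0` and `f` decreases faster than `E`, i.e. `E n - E (n + 1) < f n - f (n + 1)`; symmetrically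
for lower bounds. Both comparisons reduce to bounds on the series
`log (1 + 1/c) = ∑ 2 x^(2k+1) / (2k+1)`, `x = 1/(2c+1)`: a geometric majorant of its tail gives
`E n < 1/(2n + 1/3)`, and its first three terms give `E n > 1/(2n + 91/250)` for `n ≥ 2`.
Finally `91/250 < 1/(1-γ) - 2` because `γ > 341/591`, which is the upper bound at `n = 4`;
at `n = 1` both sides of the lower bound equal `1 - γ`. -/

open Real Filter

noncomputable def H (n : ℕ) : ℝ := ∑ i ∈ Finset.range n, (1 : ℝ) / (i + 1)

open Topology

theorem lt_of_tendsto_of_lt_succ {α : Type*} [TopologicalSpace α] [Preorder α]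
    [OrderClosedTopology α] {u : ℕ → α} {a : α} {N n : ℕ} (hu : Tendsto u atTop (𝓝 a))
    (hstep : ∀ m, N ≤ m → u m < u (m + 1)) (hn : N ≤ n) : u n < a := by
  have hmono : Monotone fun k => u (n + k) :=
    monotone_nat_of_le_succ fun k => (hstep (n + k) (by omega)).le
  have hlim : Tendsto (fun k => u (n + k)) atTop (𝓝 a) :=
    hu.comp ((tendsto_add_atTop_nat n).congr fun k => Nat.add_comm k n)
  exact (hstep n hn).trans_le (hmono.ge_of_tendsto hlim 1)

theorem lt_of_sub_succ_lt_sub_succ {u v : ℕ → ℝ} {L : ℝ} {N n : ℕ}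
    (hu : Tendsto u atTop (𝓝 L)) (hv : Tendsto v atTop (𝓝 L))
    (hstep : ∀ m, N ≤ m → u m - u (m + 1) < v m - v (m + 1)) (hn : N ≤ n) : u n < v n := by
  have h := lt_of_tendsto_of_lt_succ (u := u - v) (hu.sub hv)
    (fun m hm => by simp only [Pi.sub_apply]; linarith [hstep m hm]) hn
  simp only [Pi.sub_apply, sub_self, sub_neg] at h
  exact h

theorem sum_le_log_one_add_inv {c : ℝ} (hc : 0 < c) (K : ℕ) :
    ∑ k ∈ Finset.range K, (2 : ℝ) * (1 / (2 * k + 1)) * (1 / (2 * c + 1)) ^ (2 * k + 1)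
      ≤ log (1 + c⁻¹) :=
  sum_le_hasSum _ (fun _ _ => by positivity) (hasSum_log_one_add_inv hc)

theorem log_one_add_inv_le {c : ℝ} (hc : 0 < c) :
    log (1 + c⁻¹) ≤ 2 / (2 * c + 1) + 1 / (6 * c * (c + 1) * (2 * c + 1)) := by
  set x : ℝ := 1 / (2 * c + 1) with hx
  have hx0 : 0 < x := by positivity
  have hx1 : x < 1 := by rw [hx, div_lt_one (by linarith)]; linarith
  have htail : HasSum (fun k : ℕ => (2 : ℝ) * (1 / (2 * (k + 1) + 1)) * x ^ (2 * (k + 1) + 1))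
      (log (1 + c⁻¹) - 2 * x) := by
    simpa [Finset.sum_range_succ] using (hasSum_nat_add_iff'
      (f := fun k : ℕ => (2 : ℝ) * (1 / (2 * k + 1)) * x ^ (2 * k + 1)) 1).mpr
      (hasSum_log_one_add_inv hc)
  have hgeom :
      HasSum (fun k : ℕ => 2 / 3 * x ^ 3 * (x ^ 2) ^ k) (2 / 3 * x ^ 3 * (1 - x ^ 2)⁻¹) :=
    (hasSum_geometric_of_lt_one (by positivity) (by nlinarith)).mul_left _
  have hle : log (1 + c⁻¹) - 2 * x ≤ 2 / 3 * x ^ 3 * (1 - x ^ 2)⁻¹ := by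
    refine hasSum_le (fun k => ?_) htail hgeom
    have hpow : x ^ (2 * (k + 1) + 1) = x ^ 3 * (x ^ 2) ^ k := by
      rw [← pow_mul, ← pow_add]; ring_nf
    have hcoef : 2 * (1 / (2 * ((k : ℝ) + 1) + 1)) ≤ 2 / 3 := by
      rw [mul_one_div, div_le_div_iff₀ (by positivity) (by norm_num)]
      nlinarith [k.cast_nonneg (α := ℝ)]
    rw [hpow, mul_assoc (2 / 3 : ℝ)]
    exact mul_le_mul_of_nonneg_right hcoef (by positivity)
  have hclosed : 2 * x + 2 / 3 * x ^ 3 * (1 - x ^ 2)⁻¹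
      = 2 / (2 * c + 1) + 1 / (6 * c * (c + 1) * (2 * c + 1)) := by
    have hden : 1 - x ^ 2 = 4 * c * (c + 1) / (2 * c + 1) ^ 2 := by
      rw [hx]; field_simp; ring
    rw [hden, hx]; field_simp; ring
  linarith

theorem log_one_add_inv_sub_lt {c : ℝ} (hc : 7 / 18 < c) :
    log (1 + c⁻¹) - 1 / (c + 1) < 1 / (2 * c + 1 / 3) - 1 / (2 * (c + 1) + 1 / 3) := by
  have hc0 : 0 < c := by linarith
  have hgap : 1 / (2 * c + 1 / 3) - 1 / (2 * (c + 1) + 1 / 3)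
        - (2 / (2 * c + 1) + 1 / (6 * c * (c + 1) * (2 * c + 1)) - 1 / (c + 1))
      = (18 * c - 7) / (6 * c * (c + 1) * (2 * c + 1) * (6 * c + 1) * (6 * c + 7)) := by
    field_simp; ring
  have hpos : 0 < (18 * c - 7) / (6 * c * (c + 1) * (2 * c + 1) * (6 * c + 1) * (6 * c + 7)) :=
    div_pos (by linarith) (by positivity)
  linarith [log_one_add_inv_le hc0]

theorem sub_lt_log_one_add_inv_sub {c : ℝ} (hc : 2 ≤ c) :
    1 / (2 * c + 91 / 250) - 1 / (2 * (c + 1) + 91 / 250) < log (1 + c⁻¹) - 1 / (c + 1) := by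
  have hsum := sum_le_log_one_add_inv (by linarith : 0 < c) 3
  norm_num [Finset.sum_range_succ] at hsum
  suffices 1 / (2 * c + 91 / 250) - 1 / (2 * (c + 1) + 91 / 250)
      < 2 * (2 * c + 1)⁻¹ + 2 / 3 * ((2 * c + 1) ^ 3)⁻¹ + 2 / 5 * ((2 * c + 1) ^ 5)⁻¹
        - 1 / (c + 1) by linarith
  -- in `d = c - 2` the cleared numerator of the difference has positive coefficients
  obtain ⟨d, hd, rfl⟩ : ∃ d, 0 ≤ d ∧ c = d + 2 := ⟨c - 2, by linarith, by ring⟩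
  rw [← sub_pos]
  field_simp
  ring_nf
  positivity

noncomputable def harmonicError (n : ℕ) : ℝ := H n - log n - eulerMascheroniConstant

theorem H_eq_harmonic (n : ℕ) : H n = harmonic n := by
  simp [H, harmonic, one_div]

theorem tendsto_harmonicError : Tendsto harmonicError atTop (𝓝 0) := by
  have h := tendsto_harmonic_sub_log.sub_const eulerMascheroniConstant
  rw [sub_self] at h
  exact h.congr fun n => by rw [harmonicError, H_eq_harmonic]

theorem harmonicError_sub_succ (n : ℕ) :
    harmonicError n - harmonicError (n + 1) = log (1 + (n : ℝ)⁻¹) - 1 / (n + 1) := by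
  rcases n.eq_zero_or_pos with rfl | hn
  · simp [harmonicError, H]; ring
  have hlog : log ((n : ℝ) + 1) = log n + log (1 + (n : ℝ)⁻¹) := by
    rw [← log_mul (by positivity) (by positivity), mul_add, mul_inv_cancel₀ (by positivity),
      mul_one]
  simp only [harmonicError, H, Finset.sum_range_succ]
  push_cast
  rw [hlog]
  ring

theorem tendsto_one_div_two_mul_add (q : ℝ) :
    Tendsto (fun n : ℕ => 1 / (2 * (n : ℝ) + q)) atTop (𝓝 0) := by
  simpa only [one_div, Pi.inv_def] using
    (tendsto_atTop_add_const_right _ q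
      (tendsto_natCast_atTop_atTop.const_mul_atTop two_pos)).inv_tendsto_atTop

theorem harmonicError_lt {n : ℕ} (hn : 1 ≤ n) : harmonicError n < 1 / (2 * n + 1 / 3) :=
  lt_of_sub_succ_lt_sub_succ tendsto_harmonicError (tendsto_one_div_two_mul_add _)
    (fun m hm => by
      rw [harmonicError_sub_succ]; push_cast
      exact log_one_add_inv_sub_lt
        ((by norm_num : (7 / 18 : ℝ) < 1).trans_le (Nat.one_le_cast.mpr hm))) hn

theorem lt_harmonicError {n : ℕ} (hn : 2 ≤ n) : 1 / (2 * n + 91 / 250) < harmonicError n :=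
  lt_of_sub_succ_lt_sub_succ (tendsto_one_div_two_mul_add _) tendsto_harmonicError
    (fun m hm => by
      rw [harmonicError_sub_succ]; push_cast
      exact sub_lt_log_one_add_inv_sub (by exact_mod_cast hm)) hn

theorem lt_eulerMascheroniConstant : (341 / 591 : ℝ) < eulerMascheroniConstant := by
  have h := harmonicError_lt (n := 4) (by norm_num)
  have hH : H 4 = 25 / 12 := by norm_num [H, Finset.sum_range_succ]
  have hlog : log (4 : ℕ) = 2 * log 2 := by
    rw [show ((4 : ℕ) : ℝ) = 2 ^ 2 by norm_num, log_pow]; norm_num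
  rw [harmonicError, hH, hlog] at h
  norm_num at h
  linarith [log_two_lt_d9]

theorem stmt0 (n : ℕ) (hn : 1 ≤ n) :
    1 / (2 * n + 1 / (1 - Real.eulerMascheroniConstant) - 2) ≤ H n - Real.log n - Real.eulerMascheroniConstant ∧
    H n - Real.log n - Real.eulerMascheroniConstant < 1 / (2 * n + 1 / 3) ∧
    (1 / (2 * n + 1 / (1 - Real.eulerMascheroniConstant) - 2) = H n - Real.log n - Real.eulerMascheroniConstant ↔ n = 1) := by
  have hγ : 91 / 250 < 1 / (1 - eulerMascheroniConstant) - 2 := by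
    have hlt : 1 - eulerMascheroniConstant < 250 / 591 := by linarith [lt_eulerMascheroniConstant]
    have hpos : 0 < 1 - eulerMascheroniConstant := by
      linarith [eulerMascheroniConstant_lt_two_thirds]
    linarith [one_div_lt_one_div_of_lt hpos hlt]
  have hup : harmonicError n < 1 / (2 * n + 1 / 3) := harmonicError_lt hn
  obtain rfl | hn2 := hn.eq_or_lt
  · have heq :
        1 / (2 * ((1 : ℕ) : ℝ) + 1 / (1 - eulerMascheroniConstant) - 2) = harmonicError 1 := by
      simp [harmonicError, H]
    exact ⟨heq.le, hup, iff_of_true heq rfl⟩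
  · have hlow : 1 / (2 * n + 1 / (1 - eulerMascheroniConstant) - 2) < harmonicError n :=
      (one_div_lt_one_div_of_lt (by positivity) (by linarith)).trans (lt_harmonicError hn2)
    exact ⟨hlow.le, hup, iff_of_false hlow.ne (by omega)⟩
end

section
/- For every real x > 0, ψ(x+1) - ln x - 1/(2x) + 1/(12x²) - 1/(120x⁴) + 1/(252x⁶) lies strictly between 0 and 1/(240x⁸). -/
/-!
Let `P` be the asymptotic expansion of `ψ(x + 1)` truncated after the `x⁻⁶` term and
`R x = ψ(x + 1) - P x`. Convexity of `log Γ` and the mean value theorem squeeze `ψ(x + 1)` between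
`log x` and `log (x + 1)`, so `R → 0` at infinity. By `ψ(x + 2) = ψ(x + 1) + 1 / (x + 1)`, the
difference `R x - R (x + 1)` is the elementary function `P (x + 1) - P x - 1 / (x + 1)`, whose
derivative is minus a positive rational function. A difference that decreases strictly and tends
to `0` is positive, so `R` decreases to `0` and `R > 0`. The same argument applied to
`1 / (240 x⁸) - R x` gives the upper bound.
-/

noncomputable def digamma (x : ℝ) : ℝ := deriv (fun y => Real.log (Real.Gamma y)) x

open Real Set Filter Topology

lemma differentiableAt_log_Gamma {x : ℝ} (hx : 0 < x) :
    DifferentiableAt ℝ (fun y => log (Gamma y)) x := by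
  have hx' : ∀ m : ℕ, x ≠ -m := fun m h => by linarith [h ▸ hx, (m.cast_nonneg : (0 : ℝ) ≤ m)]
  exact (differentiableAt_Gamma hx').log (Gamma_pos_of_pos hx).ne'

lemma hasDerivAt_log_Gamma {x : ℝ} (hx : 0 < x) :
    HasDerivAt (fun y => log (Gamma y)) (digamma x) x :=
  (differentiableAt_log_Gamma hx).hasDerivAt

lemma digamma_add_one {x : ℝ} (hx : 0 < x) : digamma (x + 1) = digamma x + 1 / x := by
  have hshift : HasDerivAt (fun y => log (Gamma (y + 1))) (digamma (x + 1)) x :=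
    (hasDerivAt_log_Gamma (by linarith)).comp_add_const x 1
  have hsplit : HasDerivAt (fun y => log y + log (Gamma y)) (x⁻¹ + digamma x) x :=
    (hasDerivAt_log hx.ne').add (hasDerivAt_log_Gamma hx)
  have heq : (fun y => log y + log (Gamma y)) =ᶠ[𝓝 x] fun y => log (Gamma (y + 1)) := by
    filter_upwards [eventually_gt_nhds hx] with y hy
    rw [Gamma_add_one hy.ne', log_mul hy.ne' (Gamma_pos_of_pos hy).ne']
  rw [(hshift.congr_of_eventuallyEq heq).unique hsplit, one_div, add_comm]

lemma digamma_monotoneOn : MonotoneOn digamma (Ioi 0) :=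
  convexOn_log_Gamma.monotoneOn_deriv fun _ hx => differentiableAt_log_Gamma hx

lemma exists_mem_Ioo_digamma_eq_log {x : ℝ} (hx : 0 < x) :
    ∃ c ∈ Ioo x (x + 1), digamma c = log x := by
  obtain ⟨c, hc, hslope⟩ := exists_hasDerivAt_eq_slope (fun t => log (Gamma t)) digamma
    (lt_add_one x)
    (fun t ht => (differentiableAt_log_Gamma (hx.trans_le ht.1)).continuousAt.continuousWithinAt)
    (fun t ht => hasDerivAt_log_Gamma (hx.trans ht.1))
  refine ⟨c, hc, ?_⟩
  rw [hslope, Gamma_add_one hx.ne', log_mul hx.ne' (Gamma_pos_of_pos hx).ne']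
  ring

lemma log_le_digamma_add_one {x : ℝ} (hx : 0 < x) : log x ≤ digamma (x + 1) := by
  obtain ⟨c, hc, hc_eq⟩ := exists_mem_Ioo_digamma_eq_log hx
  exact hc_eq ▸ digamma_monotoneOn (hx.trans hc.1) (by simp only [mem_Ioi]; linarith) hc.2.le

lemma digamma_add_one_le_log_add_one {x : ℝ} (hx : 0 < x) : digamma (x + 1) ≤ log (x + 1) := by
  obtain ⟨c, hc, hc_eq⟩ := exists_mem_Ioo_digamma_eq_log (by linarith : 0 < x + 1)
  exact hc_eq ▸ digamma_monotoneOn (by simp only [mem_Ioi]; linarith)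
    (by simp only [mem_Ioi]; linarith [hc.1]) hc.1.le

lemma tendsto_digamma_add_one_sub_log :
    Tendsto (fun x => digamma (x + 1) - log x) atTop (𝓝 0) := by
  refine tendsto_of_tendsto_of_tendsto_of_le_of_le' tendsto_const_nhds
    (tendsto_log_comp_add_sub_log 1) ?_ ?_ <;>
  filter_upwards [eventually_gt_atTop 0] with x hx
  · linarith [log_le_digamma_add_one hx]
  · linarith [digamma_add_one_le_log_add_one hx]

lemma tendsto_one_div_mul_pow_atTop (c : ℝ) {n : ℕ} (hn : n ≠ 0) :
    Tendsto (fun y : ℝ => 1 / (c * y ^ n)) atTop (𝓝 0) := by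
  simpa [div_eq_mul_inv, mul_comm] using
    (tendsto_const_nhds (x := c⁻¹)).div_atTop (tendsto_pow_atTop (α := ℝ) hn)

lemma hasDerivAt_one_div_mul_pow (c : ℝ) (n : ℕ) {x : ℝ} (hx : x ≠ 0) :
    HasDerivAt (fun y => 1 / (c * y ^ n)) (-(n / (c * x ^ (n + 1)))) x := by
  have h := (hasDerivAt_zpow (-n) x (Or.inl hx)).const_mul c⁻¹
  have hexp : -(n : ℤ) - 1 = -((n + 1 : ℕ) : ℤ) := by push_cast; ring
  rw [hexp, zpow_neg, zpow_natCast] at h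
  simp only [zpow_neg, zpow_natCast, ← mul_inv] at h
  simp only [one_div]
  refine h.congr_deriv ?_
  push_cast
  ring

lemma strictAntiOn_Ioi_of_hasDerivAt_neg {f f' : ℝ → ℝ} {a : ℝ}
    (hf : ∀ x, a < x → HasDerivAt f (f' x) x) (hf' : ∀ x, a < x → f' x < 0) :
    StrictAntiOn f (Ioi a) := by
  refine strictAntiOn_of_hasDerivWithinAt_neg (f' := f') (convex_Ioi a)
    (fun x hx => (hf x hx).continuousAt.continuousWithinAt) (fun x hx => ?_) (fun x hx => ?_)
  all_goals rw [interior_Ioi] at hx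
  exacts [(hf x hx).hasDerivWithinAt, hf' x hx]

lemma nonneg_of_tendsto_of_add_one_le {f : ℝ → ℝ} {a x : ℝ} (hf : Tendsto f atTop (𝓝 0))
    (hstep : ∀ y, a < y → f (y + 1) ≤ f y) (hx : a < x) : 0 ≤ f x := by
  have hshift : ∀ n : ℕ, f (x + n) ≤ f x := by
    intro n
    induction n with
    | zero => simp
    | succ n ih =>
      rw [Nat.cast_succ, ← add_assoc]
      exact (hstep _ (by linarith [(n.cast_nonneg : (0 : ℝ) ≤ n)])).trans ih
  exact le_of_tendsto' (hf.comp (tendsto_atTop_add_const_left _ x tendsto_natCast_atTop_atTop))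
    hshift

lemma StrictAntiOn.pos_of_tendsto_zero {f : ℝ → ℝ} {a x : ℝ} (hf : StrictAntiOn f (Ioi a))
    (hlim : Tendsto f atTop (𝓝 0)) (hx : a < x) : 0 < f x := by
  have hstep : ∀ y, a < y → f (y + 1) < f y := fun y hy =>
    hf hy (show a < y + 1 by linarith) (lt_add_one y)
  exact (nonneg_of_tendsto_of_add_one_le hlim (fun y hy => (hstep y hy).le)
    (show a < x + 1 by linarith)).trans_lt (hstep x hx)

lemma pos_of_tendsto_zero_of_strictAntiOn_sub_add_one {f : ℝ → ℝ} {a x : ℝ}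
    (hf : Tendsto f atTop (𝓝 0)) (hΔ : StrictAntiOn (fun y => f y - f (y + 1)) (Ioi a))
    (hx : a < x) : 0 < f x := by
  have hΔlim : Tendsto (fun y => f y - f (y + 1)) atTop (𝓝 0) := by
    simpa using hf.sub (hf.comp (tendsto_atTop_add_const_right _ 1 tendsto_id))
  have hΔpos : ∀ y, a < y → 0 < f y - f (y + 1) := fun y hy => hΔ.pos_of_tendsto_zero hΔlim hy
  have hnonneg := nonneg_of_tendsto_of_add_one_le hf (fun y hy => (sub_pos.1 (hΔpos y hy)).le)
    (show a < x + 1 by linarith)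
  linarith [hΔpos x hx]

noncomputable def digammaExpansion (x : ℝ) : ℝ :=
  log x + 1 / (2 * x) - 1 / (12 * x ^ 2) + 1 / (120 * x ^ 4) - 1 / (252 * x ^ 6)

lemma hasDerivAt_digammaExpansion {x : ℝ} (hx : 0 < x) :
    HasDerivAt digammaExpansion
      (1 / x - 1 / (2 * x ^ 2) + 1 / (6 * x ^ 3) - 1 / (30 * x ^ 5) + 1 / (42 * x ^ 7)) x := by
  have h := (((((hasDerivAt_log hx.ne').add (hasDerivAt_one_div_mul_pow 2 1 hx.ne')).sub
    (hasDerivAt_one_div_mul_pow 12 2 hx.ne')).add (hasDerivAt_one_div_mul_pow 120 4 hx.ne')).sub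
    (hasDerivAt_one_div_mul_pow 252 6 hx.ne'))
  simp only [pow_one] at h
  refine h.congr_deriv ?_
  field_simp
  ring

lemma tendsto_digammaExpansion_sub_log :
    Tendsto (fun x => digammaExpansion x - log x) atTop (𝓝 0) := by
  have h := (((tendsto_one_div_mul_pow_atTop 2 one_ne_zero).sub
    (tendsto_one_div_mul_pow_atTop 12 two_ne_zero)).add
    (tendsto_one_div_mul_pow_atTop 120 (by norm_num : 4 ≠ 0))).sub
    (tendsto_one_div_mul_pow_atTop 252 (by norm_num : 6 ≠ 0))
  simp only [pow_one, sub_zero, add_zero] at h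
  refine h.congr fun x => ?_
  simp only [digammaExpansion]
  ring

noncomputable def digammaRemainder (x : ℝ) : ℝ := digamma (x + 1) - digammaExpansion x

lemma tendsto_digammaRemainder : Tendsto digammaRemainder atTop (𝓝 0) := by
  have h := tendsto_digamma_add_one_sub_log.sub tendsto_digammaExpansion_sub_log
  simp only [sub_sub_sub_cancel_right, sub_zero] at h
  exact h

noncomputable def digammaRemainderStep (x : ℝ) : ℝ :=
  digammaExpansion (x + 1) - digammaExpansion x - 1 / (x + 1)

lemma digammaRemainder_sub_add_one {x : ℝ} (hx : 0 < x) :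
    digammaRemainder x - digammaRemainder (x + 1) = digammaRemainderStep x := by
  simp only [digammaRemainder, digammaRemainderStep, digamma_add_one (by linarith : 0 < x + 1)]
  ring

lemma hasDerivAt_digammaRemainderStep {x : ℝ} (hx : 0 < x) :
    HasDerivAt digammaRemainderStep
      (-((1 / 42 + x / 6 + 7 * x ^ 2 / 15 + 3 * x ^ 3 / 5 + 3 * x ^ 4 / 10)
        / (x ^ 7 * (x + 1) ^ 7))) x := by
  have hx1 : 0 < x + 1 := by linarith
  have h := (((hasDerivAt_digammaExpansion hx1).comp_add_const x 1).sub
    (hasDerivAt_digammaExpansion hx)).sub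
    ((hasDerivAt_one_div_mul_pow 1 1 hx1.ne').comp_add_const x 1)
  simp only [one_mul, pow_one] at h
  refine h.congr_deriv ?_
  field_simp
  ring

noncomputable def digammaUpperStep (x : ℝ) : ℝ :=
  1 / (240 * x ^ 8) - 1 / (240 * (x + 1) ^ 8) - digammaRemainderStep x

lemma hasDerivAt_digammaUpperStep {x : ℝ} (hx : 0 < x) :
    HasDerivAt digammaUpperStep
      (-((1 / 30 + 3 * x / 10 + 247 * x ^ 2 / 210 + 181 * x ^ 3 / 70 + 709 * x ^ 4 / 210
        + 5 * x ^ 5 / 2 + 5 * x ^ 6 / 6) / (x ^ 9 * (x + 1) ^ 9))) x := by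
  have hx1 : 0 < x + 1 := by linarith
  have h := ((hasDerivAt_one_div_mul_pow 240 8 hx.ne').sub
    ((hasDerivAt_one_div_mul_pow 240 8 hx1.ne').comp_add_const x 1)).sub
    (hasDerivAt_digammaRemainderStep hx)
  refine h.congr_deriv ?_
  field_simp
  ring

lemma strictAntiOn_digammaRemainderStep : StrictAntiOn digammaRemainderStep (Ioi 0) :=
  strictAntiOn_Ioi_of_hasDerivAt_neg (fun _ => hasDerivAt_digammaRemainderStep)
    fun y (hy : 0 < y) => neg_neg_of_pos (by positivity)

lemma strictAntiOn_digammaUpperStep : StrictAntiOn digammaUpperStep (Ioi 0) :=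
  strictAntiOn_Ioi_of_hasDerivAt_neg (fun _ => hasDerivAt_digammaUpperStep)
    fun y (hy : 0 < y) => neg_neg_of_pos (by positivity)

lemma digammaRemainder_pos {x : ℝ} (hx : 0 < x) : 0 < digammaRemainder x :=
  pos_of_tendsto_zero_of_strictAntiOn_sub_add_one tendsto_digammaRemainder
    (strictAntiOn_digammaRemainderStep.congr fun _ hy => (digammaRemainder_sub_add_one hy).symm) hx

lemma digammaRemainder_lt {x : ℝ} (hx : 0 < x) : digammaRemainder x < 1 / (240 * x ^ 8) := by
  have hlim : Tendsto (fun y => 1 / (240 * y ^ 8) - digammaRemainder y) atTop (𝓝 0) := by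
    simpa using (tendsto_one_div_mul_pow_atTop 240 (by norm_num : 8 ≠ 0)).sub
      tendsto_digammaRemainder
  refine sub_pos.1 (pos_of_tendsto_zero_of_strictAntiOn_sub_add_one
    (f := fun y => 1 / (240 * y ^ 8) - digammaRemainder y) hlim
    (strictAntiOn_digammaUpperStep.congr fun y hy => ?_) hx)
  show digammaUpperStep y = 1 / (240 * y ^ 8) - digammaRemainder y
    - (1 / (240 * (y + 1) ^ 8) - digammaRemainder (y + 1))
  rw [digammaUpperStep, ← digammaRemainder_sub_add_one hy]
  ring

theorem stmt8 (x : ℝ) (hx : 0 < x) :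
    0 < digamma (x + 1) - Real.log x - 1 / (2 * x) + 1 / (12 * x ^ 2) - 1 / (120 * x ^ 4)
        + 1 / (252 * x ^ 6) ∧
    digamma (x + 1) - Real.log x - 1 / (2 * x) + 1 / (12 * x ^ 2) - 1 / (120 * x ^ 4)
        + 1 / (252 * x ^ 6) < 1 / (240 * x ^ 8) := by
  have hlower := digammaRemainder_pos hx
  have hupper := digammaRemainder_lt hx
  simp only [digammaRemainder, digammaExpansion] at hlower hupper
  constructor <;> linarith
end

section
/- For every real x > 0, 1/x² - 1/(x(x+1)) - 1/(3x³) + 1/(15x⁵) - 1/(18x⁷) < 1/x + 1/(x+1) - 2ψ'(x+1) < 1/x² - 1/(x(x+1)) - 1/(3x³) + 1/(15x⁵). -/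
/-!
By the Bohr–Mollerup limit, `log Γ(x) = -γx - log x + ∑ₙ (x/(n+1) - log(1 + x/(n+1)))`
for `x > 0`; differentiating twice termwise gives `ψ'(x) = ∑ₙ 1/(x+n)²`. The two bounds of the claim
are `1/x + 1/(x+1) - 2Q(x)` and `1/x + 1/(x+1) - 2P(x)` for rational functions `P < Q` vanishing
at infinity, so it amounts to `P(x) < ψ'(x+1) < Q(x)`. This follows by telescoping from
`P(t) - P(t+1) < 1/(t+1)² < Q(t) - Q(t+1)` for `t > 0`, each difference being a rational
function whose numerator has positive coefficients.
-/

open Real Filter Topology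

noncomputable def trigamma (x : ℝ) : ℝ := deriv digamma x

lemma summable_div_nat_add_sq (c a : ℝ) : Summable fun n : ℕ => c / (n + a) ^ 2 := by
  refine (((Real.summable_one_div_nat_add_rpow a 2).mpr one_lt_two).mul_left c).congr fun n => ?_
  rw [Real.rpow_two, sq_abs, mul_one_div]

lemma summable_one_div_add_nat_sq (a : ℝ) : Summable fun n : ℕ => 1 / (a + n) ^ 2 := by
  simpa only [add_comm] using summable_div_nat_add_sq 1 a

noncomputable def logGammaTerm (n : ℕ) (y : ℝ) : ℝ :=
  y / (n + 1) - log (y + n + 1) + log (n + 1)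

noncomputable def digammaTerm (n : ℕ) (y : ℝ) : ℝ := 1 / (n + 1) - 1 / (y + n + 1)

lemma hasDerivAt_logGammaTerm (n : ℕ) {y : ℝ} (hy : -1 < y) :
    HasDerivAt (logGammaTerm n) (digammaTerm n y) y := by
  have hpos : 0 < y + n + 1 := by linarith [(n.cast_nonneg : (0 : ℝ) ≤ n)]
  have := (((hasDerivAt_id' y).div_const ((n : ℝ) + 1)).sub
    ((((hasDerivAt_id' y).add_const (n : ℝ)).add_const 1).log hpos.ne')).add_const (log (n + 1))
  exact this.congr_deriv (by simp [digammaTerm])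

lemma hasDerivAt_digammaTerm (n : ℕ) {y : ℝ} (hy : -1 < y) :
    HasDerivAt (digammaTerm n) (1 / (y + n + 1) ^ 2) y := by
  have hpos : 0 < y + n + 1 := by linarith [(n.cast_nonneg : (0 : ℝ) ≤ n)]
  have := ((((hasDerivAt_id' y).add_const (n : ℝ)).add_const 1).inv hpos.ne').const_sub
    (1 / ((n : ℝ) + 1))
  unfold digammaTerm
  simp only [one_div] at this ⊢
  exact this.congr_deriv (by ring)

lemma abs_digammaTerm_le (n : ℕ) {y : ℝ} (hy : -1 / 2 < y) :
    |digammaTerm n y| ≤ 2 * |y| / (n + 1) ^ 2 := by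
  have hn : (0 : ℝ) < n + 1 := by positivity
  have hpos : (n + 1) / 2 < y + n + 1 := by linarith [(n.cast_nonneg : (0 : ℝ) ≤ n)]
  have hprod : 0 < (n + 1) * (y + n + 1) := by nlinarith
  have hne : y + n + 1 ≠ 0 := by linarith
  have : digammaTerm n y = y / ((n + 1) * (y + n + 1)) := by
    unfold digammaTerm; field_simp; ring
  rw [this, abs_div, abs_of_pos hprod, div_le_div_iff₀ hprod (by positivity)]
  nlinarith [mul_nonneg (mul_nonneg (abs_nonneg y) hn.le)
    (by linarith : (0 : ℝ) ≤ 2 * (y + n + 1) - (n + 1))]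

lemma one_div_add_sq_le (n : ℕ) {y : ℝ} (hy : -1 / 2 < y) :
    1 / (y + n + 1) ^ 2 ≤ 4 / (n + 1) ^ 2 := by
  have hpos : (n + 1) / 2 < y + n + 1 := by linarith [(n.cast_nonneg : (0 : ℝ) ≤ n)]
  rw [div_le_div_iff₀ (by nlinarith) (by positivity)]
  nlinarith

lemma abs_le_abs_add_one_of_mem_Ioo {y z : ℝ} (hz : z ∈ Set.Ioo (-1 / 2) (|y| + 1)) :
    |z| ≤ |y| + 1 :=
  abs_le.mpr ⟨by linarith [hz.1, abs_nonneg y], hz.2.le⟩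

-- The interval `(-1/2, |y| + 1)` contains `0`, where every term vanishes.
lemma summable_logGammaTerm {y : ℝ} (hy : -1 / 2 < y) : Summable fun n => logGammaTerm n y :=
  summable_of_summable_hasDerivAt_of_isPreconnected (t := Set.Ioo (-1 / 2) (|y| + 1))
    (summable_div_nat_add_sq (2 * (|y| + 1)) 1)
    isOpen_Ioo isPreconnected_Ioo
    (fun n z hz => hasDerivAt_logGammaTerm n (by linarith [hz.1]))
    (fun n z hz =>
      (abs_digammaTerm_le n hz.1).trans (by gcongr; exact abs_le_abs_add_one_of_mem_Ioo hz))
    (y₀ := 0) ⟨by norm_num, by positivity⟩ (by simp [logGammaTerm])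
    ⟨hy, by linarith [le_abs_self y]⟩

lemma hasDerivAt_tsum_logGammaTerm {y : ℝ} (hy : -1 / 2 < y) :
    HasDerivAt (fun z => ∑' n, logGammaTerm n z) (∑' n, digammaTerm n y) y :=
  hasDerivAt_tsum_of_isPreconnected (t := Set.Ioo (-1 / 2) (|y| + 1))
    (summable_div_nat_add_sq (2 * (|y| + 1)) 1)
    isOpen_Ioo isPreconnected_Ioo
    (fun n z hz => hasDerivAt_logGammaTerm n (by linarith [hz.1]))
    (fun n z hz =>
      (abs_digammaTerm_le n hz.1).trans (by gcongr; exact abs_le_abs_add_one_of_mem_Ioo hz))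
    (y₀ := 0) ⟨by norm_num, by positivity⟩ (by simp [logGammaTerm])
    ⟨hy, by linarith [le_abs_self y]⟩

lemma hasDerivAt_tsum_digammaTerm {y : ℝ} (hy : -1 / 2 < y) :
    HasDerivAt (fun z => ∑' n, digammaTerm n z) (∑' n : ℕ, 1 / (y + n + 1) ^ 2) y :=
  hasDerivAt_tsum_of_isPreconnected (t := Set.Ioo (-1 / 2) (y + 1)) (summable_div_nat_add_sq 4 1)
    isOpen_Ioo isPreconnected_Ioo
    (fun n z hz => hasDerivAt_digammaTerm n (by linarith [hz.1]))
    (fun n z hz => by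
      rw [Real.norm_of_nonneg (by positivity)]
      exact one_div_add_sq_le n hz.1)
    (y₀ := 0) ⟨by norm_num, by linarith⟩ (by simp [digammaTerm]) ⟨hy, lt_add_one y⟩

lemma logGammaSeq_eq_sum_logGammaTerm (x : ℝ) (n : ℕ) :
    BohrMollerup.logGammaSeq x n =
      ∑ k ∈ Finset.range n, logGammaTerm k x - log x - x * (harmonic n - log n) := by
  have hfact : log (n.factorial : ℝ) = ∑ k ∈ Finset.range n, log ((k : ℝ) + 1) := by
    rw [← Finset.prod_range_add_one_eq_factorial, Nat.cast_prod,
      log_prod fun k _ => by positivity]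
    push_cast
    rfl
  rw [BohrMollerup.logGammaSeq, hfact, Finset.sum_range_succ', harmonic]
  simp only [logGammaTerm, Finset.sum_add_distrib, Finset.sum_sub_distrib, ← Finset.mul_sum,
    div_eq_mul_inv]
  push_cast
  ring_nf

lemma log_Gamma_eq_tsum {x : ℝ} (hx : 0 < x) :
    log (Gamma x) = ∑' n, logGammaTerm n x - log x - eulerMascheroniConstant * x := by
  refine tendsto_nhds_unique (BohrMollerup.tendsto_log_gamma hx) ?_
  have := ((summable_logGammaTerm (y := x) (by linarith)).hasSum.tendsto_sum_nat.sub_const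
    (log x)).sub (tendsto_harmonic_sub_log.const_mul x)
  rw [mul_comm]
  exact this.congr fun n => (logGammaSeq_eq_sum_logGammaTerm x n).symm

lemma digamma_eq_tsum {x : ℝ} (hx : 0 < x) :
    digamma x = ∑' n, digammaTerm n x - x⁻¹ - eulerMascheroniConstant := by
  have hderiv := ((hasDerivAt_tsum_logGammaTerm (by linarith)).sub (hasDerivAt_log hx.ne')).sub
    ((hasDerivAt_id' x).const_mul eulerMascheroniConstant)
  rw [mul_one] at hderiv
  have hev : (fun y => log (Gamma y)) =ᶠ[𝓝 x]
      fun y => ∑' n, logGammaTerm n y - log y - eulerMascheroniConstant * y :=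
    eventually_of_mem (Ioi_mem_nhds hx) fun y hy => log_Gamma_eq_tsum hy
  rw [digamma, hev.deriv_eq]
  exact hderiv.deriv

lemma trigamma_eq_tsum {x : ℝ} (hx : 0 < x) : trigamma x = ∑' n : ℕ, 1 / (x + n) ^ 2 := by
  have hderiv : HasDerivAt (fun y => ∑' n, digammaTerm n y - y⁻¹ - eulerMascheroniConstant)
      (∑' n : ℕ, 1 / (x + n + 1) ^ 2 - -(x ^ 2)⁻¹) x :=
    ((hasDerivAt_tsum_digammaTerm (by linarith)).sub (hasDerivAt_inv hx.ne')).sub_const _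
  have hev : digamma =ᶠ[𝓝 x]
      fun y => ∑' n, digammaTerm n y - y⁻¹ - eulerMascheroniConstant :=
    eventually_of_mem (Ioi_mem_nhds hx) fun y hy => digamma_eq_tsum hy
  rw [trigamma, hev.deriv_eq, hderiv.deriv, (summable_one_div_add_nat_sq x).tsum_eq_zero_add]
  push_cast
  ring_nf

lemma tsum_le_of_le_sub_succ {f g : ℕ → ℝ} (hf : Summable f) (hg : Tendsto g atTop (𝓝 0))
    (h : ∀ n, f n ≤ g n - g (n + 1)) : ∑' n, f n ≤ g 0 := by
  have hpartial (n : ℕ) : ∑ k ∈ Finset.range n, f k ≤ g 0 - g n := by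
    rw [← Finset.sum_range_sub']
    exact Finset.sum_le_sum fun k _ => h k
  exact le_of_tendsto_of_tendsto' hf.hasSum.tendsto_sum_nat (by simpa using hg.const_sub (g 0))
    hpartial

lemma tsum_lt_of_lt_sub_succ {f g : ℕ → ℝ} (hf : Summable f) (hg : Tendsto g atTop (𝓝 0))
    (h : ∀ n, f n < g n - g (n + 1)) : ∑' n, f n < g 0 := by
  have htail := tsum_le_of_le_sub_succ ((summable_nat_add_iff 1).mpr hf)
    (hg.comp (tendsto_add_atTop_nat 1)) fun n => (h (n + 1)).le
  rw [hf.tsum_eq_zero_add]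
  linarith [h 0, show (g ∘ fun n => n + 1) 0 = g 1 from rfl]

lemma lt_tsum_of_sub_succ_lt {f g : ℕ → ℝ} (hf : Summable f) (hg : Tendsto g atTop (𝓝 0))
    (h : ∀ n, g n - g (n + 1) < f n) : g 0 < ∑' n, f n := by
  have := tsum_lt_of_lt_sub_succ hf.neg (by simpa using hg.neg) fun n => by linarith [h n]
  rw [tsum_neg] at this
  linarith

/- `trigammaSuccLower` truncates the asymptotic expansion
`ψ'(x+1) ~ 1/x - 1/(2x²) + 1/(6x³) - 1/(30x⁵) + 1/(42x⁷) - ⋯` before the `x⁻⁷` term;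
`trigammaSuccUpper` replaces `1/42` by `1/36`. -/
noncomputable def trigammaSuccLower (t : ℝ) : ℝ :=
  t⁻¹ - t⁻¹ ^ 2 / 2 + t⁻¹ ^ 3 / 6 - t⁻¹ ^ 5 / 30

noncomputable def trigammaSuccUpper (t : ℝ) : ℝ := trigammaSuccLower t + t⁻¹ ^ 7 / 36

lemma tendsto_trigammaSuccLower : Tendsto trigammaSuccLower atTop (𝓝 0) := by
  have : Tendsto (fun u : ℝ => u - u ^ 2 / 2 + u ^ 3 / 6 - u ^ 5 / 30) (𝓝 0) (𝓝 0) := by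
    simpa using
      ((by fun_prop : Continuous fun u : ℝ => u - u ^ 2 / 2 + u ^ 3 / 6 - u ^ 5 / 30).tendsto 0)
  exact this.comp tendsto_inv_atTop_zero

lemma tendsto_trigammaSuccUpper : Tendsto trigammaSuccUpper atTop (𝓝 0) := by
  have h7 : Tendsto (fun u : ℝ => u ^ 7 / 36) (𝓝 0) (𝓝 0) := by
    simpa using ((by fun_prop : Continuous fun u : ℝ => u ^ 7 / 36).tendsto 0)
  have := tendsto_trigammaSuccLower.add (h7.comp tendsto_inv_atTop_zero)
  rwa [add_zero] at this

lemma trigammaSuccLower_sub_lt {t : ℝ} (ht : 0 < t) :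
    trigammaSuccLower t - trigammaSuccLower (t + 1) < 1 / (t + 1) ^ 2 := by
  have key : 1 / (t + 1) ^ 2 - (trigammaSuccLower t - trigammaSuccLower (t + 1)) =
      (30 * t ^ 6 + 90 * t ^ 5 + 96 * t ^ 4 + 42 * t ^ 3 + 6 * t ^ 2) /
        (180 * t ^ 7 * (t + 1) ^ 7) := by
    unfold trigammaSuccLower
    field_simp
    ring
  have : 0 < 1 / (t + 1) ^ 2 - (trigammaSuccLower t - trigammaSuccLower (t + 1)) := by
    rw [key]; positivity
  linarith

lemma lt_trigammaSuccUpper_sub {t : ℝ} (ht : 0 < t) :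
    1 / (t + 1) ^ 2 < trigammaSuccUpper t - trigammaSuccUpper (t + 1) := by
  have key : trigammaSuccUpper t - trigammaSuccUpper (t + 1) - 1 / (t + 1) ^ 2 =
      (5 * t ^ 6 + 15 * t ^ 5 + 79 * t ^ 4 + 133 * t ^ 3 + 99 * t ^ 2 + 35 * t + 5) /
        (180 * t ^ 7 * (t + 1) ^ 7) := by
    unfold trigammaSuccUpper trigammaSuccLower
    field_simp
    ring
  have : 0 < trigammaSuccUpper t - trigammaSuccUpper (t + 1) - 1 / (t + 1) ^ 2 := by
    rw [key]; positivity
  linarith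

lemma trigammaSuccLower_lt_trigamma {x : ℝ} (hx : 0 < x) :
    trigammaSuccLower x < trigamma (x + 1) := by
  rw [trigamma_eq_tsum (by linarith)]
  have := lt_tsum_of_sub_succ_lt (f := fun n : ℕ => 1 / (x + 1 + n) ^ 2)
    (g := fun n : ℕ => trigammaSuccLower (x + n)) (summable_one_div_add_nat_sq (x + 1))
    (tendsto_trigammaSuccLower.comp (tendsto_atTop_add_const_left _ _ tendsto_natCast_atTop_atTop))
    fun n => by
      have := trigammaSuccLower_sub_lt (t := x + n) (by positivity)
      rwa [Nat.cast_succ, ← add_assoc, add_right_comm x 1]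
  simpa using this

lemma trigamma_lt_trigammaSuccUpper {x : ℝ} (hx : 0 < x) :
    trigamma (x + 1) < trigammaSuccUpper x := by
  rw [trigamma_eq_tsum (by linarith)]
  have := tsum_lt_of_lt_sub_succ (f := fun n : ℕ => 1 / (x + 1 + n) ^ 2)
    (g := fun n : ℕ => trigammaSuccUpper (x + n)) (summable_one_div_add_nat_sq (x + 1))
    (tendsto_trigammaSuccUpper.comp (tendsto_atTop_add_const_left _ _ tendsto_natCast_atTop_atTop))
    fun n => by
      have := lt_trigammaSuccUpper_sub (t := x + n) (by positivity)
      rwa [Nat.cast_succ, ← add_assoc, add_right_comm x 1]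
  simpa using this

theorem stmt11 (x : ℝ) (hx : 0 < x) :
    1 / x ^ 2 - 1 / (x * (x + 1)) - 1 / (3 * x ^ 3) + 1 / (15 * x ^ 5) - 1 / (18 * x ^ 7)
      < 1 / x + 1 / (x + 1) - 2 * trigamma (x + 1) ∧
    1 / x + 1 / (x + 1) - 2 * trigamma (x + 1)
      < 1 / x ^ 2 - 1 / (x * (x + 1)) - 1 / (3 * x ^ 3) + 1 / (15 * x ^ 5) := by
  have hlower := trigammaSuccLower_lt_trigamma hx
  have hupper := trigamma_lt_trigammaSuccUpper hx
  have hl : 1 / x + 1 / (x + 1) - 2 * trigammaSuccLower x =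
      1 / x ^ 2 - 1 / (x * (x + 1)) - 1 / (3 * x ^ 3) + 1 / (15 * x ^ 5) := by
    unfold trigammaSuccLower
    field_simp
    ring
  have hu : 1 / x + 1 / (x + 1) - 2 * trigammaSuccUpper x =
      1 / x ^ 2 - 1 / (x * (x + 1)) - 1 / (3 * x ^ 3) + 1 / (15 * x ^ 5) - 1 / (18 * x ^ 7) := by
    unfold trigammaSuccUpper trigammaSuccLower
    field_simp
    ring
  constructor <;> linarith
end
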